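/- Let B be a ring and S a multiplicatively closed subset such that the associated category 𝒮 is filtered. Then for s ∈ S, left multiplication l_s : B|S → B|S is injective if and only if for every b ∈ B with sb = 0 there exists t ∈ S with bt = 0 (i.e. 0 ∈ bS). -/

import Mathlib

/-! STATEMENT 2: if the category 𝒮 associated to a multiplicatively closed set S
is filtered, then for s ∈ S, left multiplication by s on the module of right
fractions B|S is injective iff (∀ b, sb = 0 → ∃ t ∈ S, bt = 0). -/

/-- The submodule of relations defining the module of right fractions. -/
noncomputable def fracRel (B : Type) [Ring B] (S : Set B) : Submodule B (↥S →₀ B) :=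
  Submodule.span B { v | ∃ (s x : B) (hs : s ∈ S) (hsx : s * x ∈ S),
    v = Finsupp.single ⟨s * x, hsx⟩ x - Finsupp.single ⟨s, hs⟩ 1 }

/-- The left `B`-module `B|S` of right fractions with denominators in `S`. -/
abbrev Frac (B : Type) [Ring B] (S : Set B) : Type :=
  (↥S →₀ B) ⧸ fracRel B S

/-- The fraction `b|s`. -/
noncomputable def fracElt (B : Type) [Ring B] (S : Set B) (b s : B) (hs : s ∈ S) :
    Frac B S :=
  Submodule.Quotient.mk (Finsupp.single ⟨s, hs⟩ b)

/-- A left `B`-module is `S`-local if every `s ∈ S` acts invertibly by left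
multiplication. -/
def SLocal (B : Type) [Ring B] (S : Set B) (N : Type) [AddCommGroup N] [Module B N] :
    Prop :=
  ∀ s ∈ S, Function.Bijective (fun n : N => s • n)

/-!
The module `B|S` is the colimit, over the filtered category `𝒮`, of the diagram `s ↦ B` whose
transition maps are right multiplications. In a filtered colimit of modules an element of the
`s`-th copy of `B` vanishes iff it vanishes at some later stage, which gives the criterion
`b|t = 0 ↔ ∃ x, t x ∈ S ∧ b x = 0`; filteredness also makes every element a single fraction.
Then `s • (b|t) = (s b)|t` vanishes iff `s b x = 0` for some `x` with `t x ∈ S`, and the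
condition on `s` moves such an `x` on to a `t x u ∈ S` killing `b`.
-/

open CategoryTheory Limits

section Fractions

variable {B : Type} [Ring B] {S : Set B}

lemma single_mul_sub_single_mem_fracRel (b s x : B) (hs : s ∈ S) (hsx : s * x ∈ S) :
    Finsupp.single (⟨s * x, hsx⟩ : ↥S) (b * x) - Finsupp.single ⟨s, hs⟩ b ∈ fracRel B S := by
  have h := (fracRel B S).smul_mem b (Submodule.subset_span ⟨s, x, hs, hsx, rfl⟩)
  simpa only [smul_sub, Finsupp.smul_single, smul_eq_mul, mul_one] using h

lemma fracElt_eq_mul_mul (b t x : B) (ht : t ∈ S) (htx : t * x ∈ S) :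
    fracElt B S b t ht = fracElt B S (b * x) (t * x) htx := by
  rw [fracElt, fracElt, eq_comm, Submodule.Quotient.eq]
  exact single_mul_sub_single_mem_fracRel b t x ht htx

lemma fracElt_congr_denom {b s s' : B} (h : s = s') (hs : s ∈ S) (hs' : s' ∈ S) :
    fracElt B S b s hs = fracElt B S b s' hs' := by
  subst h; rfl

lemma fracElt_add (b c t : B) (ht : t ∈ S) :
    fracElt B S b t ht + fracElt B S c t ht = fracElt B S (b + c) t ht := by
  rw [fracElt, fracElt, fracElt, ← Submodule.Quotient.mk_add, Finsupp.single_add]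

lemma fracElt_zero (t : B) (ht : t ∈ S) : fracElt B S 0 t ht = 0 := by
  simp [fracElt]

lemma smul_fracElt (a b t : B) (ht : t ∈ S) :
    a • fracElt B S b t ht = fracElt B S (a * b) t ht := by
  rw [fracElt, fracElt, ← Submodule.Quotient.mk_smul, Finsupp.smul_single, smul_eq_mul]

lemma exists_fracElt_eq (h1 : (1 : B) ∈ S)
    (hfilt1 : ∀ s ∈ S, ∀ t ∈ S, ∃ x y : B, s * x = t * y ∧ s * x ∈ S) (m : Frac B S) :
    ∃ (b t : B) (ht : t ∈ S), m = fracElt B S b t ht := by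
  obtain ⟨v, rfl⟩ := Submodule.Quotient.mk_surjective _ m
  induction v using Finsupp.induction with
  | zero => exact ⟨0, 1, h1, (fracElt_zero 1 h1).symm⟩
  | single_add a b f _ _ ih =>
    obtain ⟨c, u, hu, hc⟩ := ih
    obtain ⟨x, y, hxy, hax⟩ := hfilt1 a.1 a.2 u hu
    have huy : u * y ∈ S := hxy ▸ hax
    refine ⟨b * x + c * y, a.1 * x, hax, ?_⟩
    rw [Submodule.Quotient.mk_add, hc, ← fracElt, fracElt_eq_mul_mul b a.1 x a.2 hax,
      fracElt_eq_mul_mul c u y hu huy, fracElt_congr_denom hxy.symm huy hax, fracElt_add]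

variable (B S) in
/-- The category `𝒮`: a morphism `s ⟶ t` is an `x : B` with `s * x = t`. -/
abbrev DenomCat : Type := ↥S

instance : Category (DenomCat B S) where
  Hom s t := {x : B // s.1 * x = t.1}
  id s := ⟨1, mul_one _⟩
  comp f g := ⟨f.1 * g.1, by rw [← mul_assoc, f.2, g.2]⟩
  id_comp f := Subtype.ext (one_mul _)
  comp_id f := Subtype.ext (mul_one _)
  assoc f g h := Subtype.ext (mul_assoc _ _ _)

lemma denomCat_isFiltered (h1 : (1 : B) ∈ S)
    (hfilt1 : ∀ s ∈ S, ∀ t ∈ S, ∃ x y : B, s * x = t * y ∧ s * x ∈ S)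
    (hfilt2 : ∀ s ∈ S, ∀ x y : B, s * x = s * y → s * x ∈ S →
        ∃ z : B, x * z = y * z ∧ s * x * z ∈ S) :
    IsFiltered (DenomCat B S) where
  nonempty := ⟨⟨1, h1⟩⟩
  cocone_objs s t := by
    obtain ⟨x, y, hxy, hsx⟩ := hfilt1 s.1 s.2 t.1 t.2
    exact ⟨⟨s.1 * x, hsx⟩, ⟨x, rfl⟩, ⟨y, hxy.symm⟩, trivial⟩
  cocone_maps {s t} f g := by
    obtain ⟨z, hz, hsfz⟩ := hfilt2 s.1 s.2 f.1 g.1 (f.2.trans g.2.symm)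
      (by rw [f.2]; exact t.2)
    have htz : t.1 * z ∈ S := by rw [← f.2]; exact hsfz
    exact ⟨⟨t.1 * z, htz⟩, ⟨z, rfl⟩, Subtype.ext hz⟩

variable (B S) in
abbrev denomDiagram : DenomCat B S ⥤ ModuleCat B where
  obj _ := ModuleCat.of B B
  map x := ModuleCat.ofHom (LinearMap.toSpanSingleton B B x.1)
  map_id _ := ModuleCat.hom_ext (LinearMap.ext fun b => mul_one b)
  map_comp f g := ModuleCat.hom_ext (LinearMap.ext fun b => (mul_assoc b f.1 g.1).symm)

lemma cocone_app_eq_smul (c : Cocone (denomDiagram B S)) (s : DenomCat B S) (b : B) :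
    c.ι.app s b = b • c.ι.app s (1 : B) := by
  rw [← map_smul, smul_eq_mul, mul_one]

noncomputable def fracDesc (c : Cocone (denomDiagram B S)) : Frac B S →ₗ[B] c.pt :=
  (fracRel B S).liftQ (Finsupp.linearCombination B fun s => c.ι.app s (1 : B)) <| by
    rw [fracRel, Submodule.span_le]
    rintro v ⟨s, x, hs, hsx, rfl⟩
    have hw := ConcreteCategory.congr_hom
      (c.w (⟨x, rfl⟩ : (⟨s, hs⟩ : DenomCat B S) ⟶ ⟨s * x, hsx⟩)) (1 : B)
    change c.ι.app ⟨s * x, hsx⟩ (1 * x) = c.ι.app ⟨s, hs⟩ (1 : B) at hw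
    rw [one_mul, cocone_app_eq_smul] at hw
    simp [hw]

lemma fracDesc_fracElt (c : Cocone (denomDiagram B S)) (b t : B) (ht : t ∈ S) :
    fracDesc c (fracElt B S b t ht) = c.ι.app ⟨t, ht⟩ b := by
  rw [fracDesc, fracElt, Submodule.liftQ_apply, Finsupp.linearCombination_single,
    ← cocone_app_eq_smul]

lemma fracElt_eq_zero_iff (h1 : (1 : B) ∈ S)
    (hfilt1 : ∀ s ∈ S, ∀ t ∈ S, ∃ x y : B, s * x = t * y ∧ s * x ∈ S)
    (hfilt2 : ∀ s ∈ S, ∀ x y : B, s * x = s * y → s * x ∈ S →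
        ∃ z : B, x * z = y * z ∧ s * x * z ∈ S)
    (b t : B) (ht : t ∈ S) :
    fracElt B S b t ht = 0 ↔ ∃ x : B, t * x ∈ S ∧ b * x = 0 := by
  constructor
  · intro h
    have := denomCat_isFiltered h1 hfilt1 hfilt2
    have hι := fracDesc_fracElt (colimit.cocone (denomDiagram B S)) b t ht
    rw [h, map_zero] at hι
    obtain ⟨u, f, hf⟩ := Concrete.colimit_rep_eq_zero B (denomDiagram B S) ⟨t, ht⟩ b hι.symm
    exact ⟨f.1, by rw [f.2]; exact u.2, hf⟩
  · rintro ⟨x, htx, hbx⟩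
    rw [fracElt_eq_mul_mul b t x ht htx, hbx, fracElt_zero]

end Fractions

theorem statement2_general (B : Type) [Ring B] (S : Set B)
    (h1 : (1 : B) ∈ S) (hmul : ∀ s ∈ S, ∀ t ∈ S, s * t ∈ S)
    -- filteredness of the category 𝒮 :
    (hfilt1 : ∀ s ∈ S, ∀ t ∈ S, ∃ x y : B, s * x = t * y ∧ s * x ∈ S)
    (hfilt2 : ∀ s ∈ S, ∀ x y : B, s * x = s * y → s * x ∈ S →
        ∃ z : B, x * z = y * z ∧ s * x * z ∈ S)
    (s : B) :
    Function.Injective (fun m : Frac B S => s • m) ↔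
      ∀ b : B, s * b = 0 → ∃ t ∈ S, b * t = 0 := by
  rw [show (fun m : Frac B S => s • m) = DistribSMul.toAddMonoidHom (Frac B S) s from rfl,
    injective_iff_map_eq_zero]
  constructor
  · intro hinj b hsb
    have hb : fracElt B S b 1 h1 = 0 :=
      hinj _ (by rw [DistribSMul.toAddMonoidHom_apply, smul_fracElt, hsb, fracElt_zero])
    obtain ⟨x, hx, hbx⟩ := (fracElt_eq_zero_iff h1 hfilt1 hfilt2 b 1 h1).1 hb
    exact ⟨x, by rwa [one_mul] at hx, hbx⟩
  · intro hs_reg m hm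
    obtain ⟨b, t, ht, rfl⟩ := exists_fracElt_eq h1 hfilt1 m
    rw [DistribSMul.toAddMonoidHom_apply, smul_fracElt,
      fracElt_eq_zero_iff h1 hfilt1 hfilt2] at hm
    obtain ⟨x, htx, hsbx⟩ := hm
    obtain ⟨u, hu, hbxu⟩ := hs_reg (b * x) (by rwa [← mul_assoc])
    refine (fracElt_eq_zero_iff h1 hfilt1 hfilt2 b t ht).2 ⟨x * u, ?_, ?_⟩
    · rw [← mul_assoc]
      exact hmul _ htx _ hu
    · rw [← mul_assoc, hbxu]

theorem statement2 (B : Type) [Ring B] (S : Set B)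
    (h1 : (1 : B) ∈ S) (hmul : ∀ s ∈ S, ∀ t ∈ S, s * t ∈ S)
    -- filteredness of the category 𝒮 :
    (hfilt1 : ∀ s ∈ S, ∀ t ∈ S, ∃ x y : B, s * x = t * y ∧ s * x ∈ S)
    (hfilt2 : ∀ s ∈ S, ∀ x y : B, s * x = s * y → s * x ∈ S →
        ∃ z : B, x * z = y * z ∧ s * x * z ∈ S)
    (s : B) (hs : s ∈ S) :
    Function.Injective (fun m : Frac B S => s • m) ↔
      ∀ b : B, s * b = 0 → ∃ t ∈ S, b * t = 0 :=
  statement2_general B S h1 hmul hfilt1 hfilt2 s
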